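/- Let t be a prime number and a ≥ 2 an integer, and let p be a primitive prime divisor of t^a − 1, i.e. a prime dividing t^a − 1 that does not divide t^b − 1 for any integer 1 ≤ b < a. If X is a subgroup of order p of G = GL_a(F_t), then the centralizer C_G(X) is a cyclic group of order t^a − 1. -/

import Mathlib

/-!
Let `g` generate `X`, so `g ^ p = 1 ≠ g`. An irreducible factor `f ∤ X - 1` of `X ^ p - 1` over
`𝔽_t` has a root of order `p` in the field `𝔽_t[X]/(f)` of order `t ^ deg f`, so primitivity of
`p` forces `deg f ≥ a`. As `p ≠ t`, `X ^ p - 1` is squarefree, and the minimal polynomial of `g`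
(of degree `≤ a`) must be irreducible of degree `a`. Hence `E = 𝔽_t[g]` is a field of order
`t ^ a`, `𝔽_t ^ a` is a one-dimensional `E`-vector space, the matrices commuting with `g` are
exactly `E`, and `C_G(X) = Eˣ` is cyclic of order `t ^ a - 1`.
-/

open scoped MatrixGroups

/-- The set of irreducible (complex) character degrees of the group `G`. -/
def charDegrees (G : Type) [Group G] : Set ℕ :=
  {n | ∃ V : FDRep ℂ G, CategoryTheory.Simple V ∧ Module.finrank ℂ V = n}

/-- The vertex set of the character degree graph of `G`: the primes dividing some
irreducible character degree. -/
def degreeVertexSet (G : Type) [Group G] : Set ℕ :=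
  {p | p.Prime ∧ ∃ n ∈ charDegrees G, p ∣ n}

/-- The character degree graph of `G`, as a simple graph on `ℕ`: two distinct primes
are adjacent iff their product divides some irreducible character degree. -/
def degreeGraph (G : Type) [Group G] : SimpleGraph ℕ where
  Adj p q := p ≠ q ∧ p.Prime ∧ q.Prime ∧ ∃ n ∈ charDegrees G, p * q ∣ n
  symm := by
    constructor
    rintro p q ⟨h1, h2, h3, n, hn, hd⟩
    exact ⟨h1.symm, h3, h2, n, hn, by rwa [mul_comm]⟩
  loopless := ⟨fun p h => h.1 rfl⟩

/-- The number of connected components of the subgraph of `Γ` induced on `s`. -/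
noncomputable def numComponents {α : Type*} (Γ : SimpleGraph α) (s : Set α) : ℕ :=
  Nat.card (SimpleGraph.induce s Γ).ConnectedComponent

/-- `p` is a cut-vertex of the graph `Γ` with vertex set `s` if `p ∈ s` and removing `p`
increases the number of connected components. -/
def IsCutVertex {α : Type*} (Γ : SimpleGraph α) (s : Set α) (p : α) : Prop :=
  p ∈ s ∧ numComponents Γ s < numComponents Γ (s \ {p})

/-- The character degree graph of `G` is connected. -/
def degConnected (G : Type) [Group G] : Prop :=
  (SimpleGraph.induce (degreeVertexSet G) (degreeGraph G)).Connected

/-- `p` is a cut-vertex of the character degree graph of `G`. -/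
def degCutVertex (G : Type) [Group G] (p : ℕ) : Prop :=
  IsCutVertex (degreeGraph G) (degreeVertexSet G) p

/-- The solvable radical: the largest solvable normal subgroup (for finite groups). -/
def solvableRadical (G : Type*) [Group G] : Subgroup G :=
  sSup {H : Subgroup G | H.Normal ∧ IsSolvable ↥H}

instance solvableRadical_normal (G : Type*) [Group G] : (solvableRadical G).Normal := by
  constructor
  intro x hx g
  have h : solvableRadical G ≤
      Subgroup.comap (MulAut.conj g).toMonoidHom (solvableRadical G) := by
    apply sSup_le
    intro H hH y hy
    rw [Subgroup.mem_comap]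
    exact le_sSup hH (hH.1.conj_mem y hy g)
  exact h hx

/-- The solvable residual: the last term of the derived series (for finite groups,
equivalently the intersection of all terms of the derived series). -/
def solvableResidual (G : Type*) [Group G] : Subgroup G :=
  ⨅ n, derivedSeries G n

instance solvableResidual_normal (G : Type*) [Group G] : (solvableResidual G).Normal := by
  constructor
  intro x hx g
  rw [solvableResidual, Subgroup.mem_iInf] at hx ⊢
  intro n
  exact (derivedSeries_normal G n).conj_mem x (hx n) g

open Polynomial

namespace Polynomial

variable {F : Type*} [Field F]

theorem irreducible_of_squarefree_of_forall_irreducible_dvd {g q : F[X]} {d : ℕ}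
    (hq : Irreducible q) (hsq : Squarefree g) (hg : ¬IsUnit g) (hgd : g.natDegree ≤ d)
    (hfac : ∀ f, Irreducible f → f ∣ g → f ∣ q ∨ d ≤ f.natDegree) : Irreducible g := by
  obtain ⟨f, hf, h, rfl⟩ := WfDvdMonoid.exists_irreducible_factor hg hsq.ne_zero
  have hh0 : h ≠ 0 := right_ne_zero_of_mul hsq.ne_zero
  by_cases hh : IsUnit h
  · exact (irreducible_mul_isUnit hh).mpr hf
  obtain ⟨k, hk, hkh⟩ := WfDvdMonoid.exists_irreducible_factor hh hh0
  have hdeg : f.natDegree + h.natDegree ≤ d := (natDegree_mul hf.ne_zero hh0).symm.trans_le hgd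
  have hkdeg : k.natDegree ≤ h.natDegree := natDegree_le_of_dvd hkh hh0
  -- two irreducible factors of `g` both have degree `< d`, hence are both associated to `q`
  have hassoc : ∀ f', Irreducible f' → f' ∣ f * h → f'.natDegree < d → Associated f' q :=
    fun f' hf' hdvd hlt => hf'.associated_of_dvd hq ((hfac f' hf' hdvd).resolve_right (by omega))
  have hfq := hassoc f hf (dvd_mul_right f h) (by have := hk.natDegree_pos; omega)
  have hkq := hassoc k hk (hkh.trans (dvd_mul_left h f)) (by have := hf.natDegree_pos; omega)
  exact (hf.not_isUnit (hsq f (mul_dvd_mul_left f ((hfq.trans hkq.symm).dvd.trans hkh)))).elim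

theorem finite_adjoinRoot [Finite F] {f : F[X]} (hf : f ≠ 0) : Finite (AdjoinRoot f) :=
  have := (AdjoinRoot.powerBasis hf).finite
  Module.finite_of_finite F

theorem natCard_adjoinRoot [Finite F] {f : F[X]} (hf : f ≠ 0) :
    Nat.card (AdjoinRoot f) = Nat.card F ^ f.natDegree := by
  have := (AdjoinRoot.powerBasis hf).finite
  rw [Module.natCard_eq_pow_finrank (K := F), (AdjoinRoot.powerBasis hf).finrank,
    AdjoinRoot.powerBasis_dim]

theorem prime_dvd_natCard_pow_natDegree_sub_one [Finite F] {p : ℕ} (hp : p.Prime) {f : F[X]}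
    (hf : Irreducible f) (hdvd : f ∣ X ^ p - 1) (hndvd : ¬f ∣ X - 1) :
    p ∣ Nat.card F ^ f.natDegree - 1 := by
  have := Fact.mk hf
  have := Fact.mk hp
  have := finite_adjoinRoot hf.ne_zero
  have : Fintype (AdjoinRoot f) := Fintype.ofFinite _
  set r := AdjoinRoot.root f
  have hrp : r ^ p = 1 := by
    simpa [sub_eq_zero] using AdjoinRoot.mk_eq_zero.mpr hdvd
  have hr1 : r ≠ 1 := fun h => hndvd <| AdjoinRoot.mk_eq_zero.mp (by simpa [sub_eq_zero] using h)
  have hr0 : r ≠ 0 := fun h => by simp [h, hp.ne_zero] at hrp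
  rw [← natCard_adjoinRoot hf.ne_zero, Nat.card_eq_fintype_card, ← orderOf_eq_prime hrp hr1]
  exact orderOf_dvd_of_pow_eq_one (FiniteField.pow_card_sub_one_eq_one r hr0)

theorem dvd_X_sub_one_or_le_natDegree [Finite F] {a p : ℕ} (hp : p.Prime)
    (hprim : ∀ b : ℕ, 1 ≤ b → b < a → ¬p ∣ Nat.card F ^ b - 1) {f : F[X]} (hf : Irreducible f)
    (hdvd : f ∣ X ^ p - 1) : f ∣ X - 1 ∨ a ≤ f.natDegree := by
  by_contra! h
  exact hprim _ hf.natDegree_pos h.2 (prime_dvd_natCard_pow_natDegree_sub_one hp hf hdvd h.1)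

end Polynomial

namespace minpoly

variable (F : Type*) {A : Type*} [Field F] [Ring A] [Algebra F A]

noncomputable def adjoinRootEquivAdjoin (x : A) :
    AdjoinRoot (minpoly F x) ≃ₐ[F] Algebra.adjoin F {x} :=
  ((Ideal.quotientEquivAlgOfEq F (ker_aeval_eq_span_minpoly F x).symm).trans
    (Ideal.quotientKerEquivRange (Polynomial.aeval (R := F) x))).trans
    (Subalgebra.equivOfEq _ _ (Algebra.adjoin_singleton_eq_range_aeval F x).symm)

variable {F}

theorem isUnit_of_mem_adjoin {x : A} (hirr : Irreducible (minpoly F x)) {y : A}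
    (hy : y ∈ Algebra.adjoin F {x}) (hy0 : y ≠ 0) : IsUnit y := by
  have := Fact.mk hirr
  set e := adjoinRootEquivAdjoin F x
  have hne : e.symm ⟨y, hy⟩ ≠ 0 := by simpa [Subtype.ext_iff] using hy0
  simpa using (hne.isUnit.map e).map (Algebra.adjoin F {x}).val

theorem finrank_adjoin (x : A) :
    Module.finrank F (Algebra.adjoin F {x}) = (minpoly F x).natDegree :=
  (adjoinRootEquivAdjoin F x).toLinearEquiv.finrank_eq.symm.trans
    finrank_quotient_span_eq_natDegree

end minpoly

namespace Matrix

variable {F n : Type*} [Field F] [Fintype n] [DecidableEq n]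

theorem irreducible_minpoly_of_pow_eq_one [Finite F] {p : ℕ} (hp : p.Prime) (hpF : (p : F) ≠ 0)
    (hprim : ∀ b : ℕ, 1 ≤ b → b < Fintype.card n → ¬p ∣ Nat.card F ^ b - 1)
    {M : Matrix n n F} (hMp : M ^ p = 1) (hM1 : M ≠ 1) :
    Irreducible (minpoly F M) ∧ (minpoly F M).natDegree = Fintype.card n := by
  have : Nonempty n := by
    by_contra h
    rw [not_nonempty_iff] at h
    exact hM1 (Subsingleton.elim _ _)
  have hdvd : minpoly F M ∣ X ^ p - 1 := minpoly.dvd F M (by simp [hMp])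
  have hsq : Squarefree (minpoly F M) :=
    (by simpa using (separable_X_pow_sub_C (1 : F) hpF one_ne_zero).squarefree :
      Squarefree (X ^ p - 1 : F[X])).squarefree_of_dvd hdvd
  have hle : (minpoly F M).natDegree ≤ Fintype.card n := by
    simpa using natDegree_le_of_dvd (minpoly_dvd_charpoly M) (charpoly_monic M).ne_zero
  have hfac f (hf : Irreducible f) (hfM : f ∣ minpoly F M) :=
    dvd_X_sub_one_or_le_natDegree hp hprim hf (hfM.trans hdvd)
  have hirr : Irreducible (minpoly F M) :=
    irreducible_of_squarefree_of_forall_irreducible_dvd (by simpa using irreducible_X_sub_C (1 : F))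
      hsq (minpoly.not_isUnit F M) hle hfac
  refine ⟨hirr, le_antisymm hle ((hfac _ hirr dvd_rfl).resolve_left fun h => hM1 ?_)⟩
  simpa [sub_eq_zero] using (minpoly.dvd_iff.mp h : aeval M (X - 1 : F[X]) = 0)

/- `e ↦ e *ᵥ v` embeds the field `F[M]` into `n → F`, which has the same dimension, so every
vector is `e *ᵥ v`; a matrix `N` commuting with `F[M]` is then determined by `N *ᵥ v`. -/
theorem centralizer_eq_adjoin {M : Matrix n n F} (hirr : Irreducible (minpoly F M))
    (hdeg : (minpoly F M).natDegree = Fintype.card n) :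
    Subalgebra.centralizer F {M} = Algebra.adjoin F {M} := by
  refine le_antisymm (fun N hN => ?_)
    (Algebra.adjoin_singleton_le (by simp [Subalgebra.mem_centralizer_iff]))
  have : Nonempty n := Fintype.card_pos_iff.mp (hdeg ▸ hirr.natDegree_pos)
  obtain ⟨v, hv⟩ := exists_ne (0 : n → F)
  let ψ : Algebra.adjoin F {M} →ₗ[F] (n → F) :=
    { toFun := fun e => (e : Matrix n n F) *ᵥ v
      map_add' := fun e e' => add_mulVec _ _ _
      map_smul' := fun c e => smul_mulVec c (e : Matrix n n F) v }
  have hinj : Function.Injective ψ := by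
    refine (injective_iff_map_eq_zero ψ).mpr fun e he => Subtype.ext ?_
    by_contra he0
    have hunit := minpoly.isUnit_of_mem_adjoin hirr e.2 he0
    exact hv (mulVec_injective_iff_isUnit.mpr hunit (he.trans (mulVec_zero _).symm))
  have hsurj : Function.Surjective ψ :=
    (LinearMap.injective_iff_surjective_of_finrank_eq_finrank (by
      rw [minpoly.finrank_adjoin, hdeg, Module.finrank_fintype_fun_eq_card])).mp hinj
  have hNM : Commute N M := (hN M rfl).symm
  obtain ⟨e₀, he₀ : (e₀ : Matrix n n F) *ᵥ v = N *ᵥ v⟩ := hsurj (N *ᵥ v)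
  suffices N = e₀ from this ▸ e₀.2
  refine toLin'.injective (LinearMap.ext fun w => ?_)
  obtain ⟨e, rfl⟩ := hsurj w
  have hNe : Commute N (e : Matrix n n F) :=
    Algebra.commute_of_mem_adjoin_singleton_of_commute e.2 hNM
  have he₀e : Commute (e₀ : Matrix n n F) e :=
    Algebra.commute_of_mem_adjoin_singleton_of_commute e.2
      (Algebra.commute_of_mem_adjoin_self e₀.2).symm
  change N *ᵥ ((e : Matrix n n F) *ᵥ v) = (e₀ : Matrix n n F) *ᵥ ((e : Matrix n n F) *ᵥ v)
  rw [mulVec_mulVec, hNe.eq, ← mulVec_mulVec, ← he₀, mulVec_mulVec, mulVec_mulVec, he₀e.eq]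

end Matrix

theorem Subgroup.centralizer_singleton_eq_units {A : Type*} [Monoid A] (x : Aˣ) :
    Subgroup.centralizer {x} = (Submonoid.centralizer {(x : A)}).units := by
  ext u
  simp only [Subgroup.mem_centralizer_singleton_iff, Submonoid.mem_units_iff,
    Submonoid.mem_centralizer_iff, Set.mem_singleton_iff, forall_eq, Units.ext_iff, Units.val_mul]
  exact ⟨fun h => ⟨h.symm, (Commute.units_inv_left h).symm.eq⟩, fun h => h.1.symm⟩

theorem Matrix.GeneralLinearGroup.centralizer_eq_units_adjoin {F n : Type*} [Field F] [Fintype n]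
    [DecidableEq n] (g : GL n F) (hirr : Irreducible (minpoly F (g : Matrix n n F)))
    (hdeg : (minpoly F (g : Matrix n n F)).natDegree = Fintype.card n) :
    Subgroup.centralizer {g} = (Algebra.adjoin F {(g : Matrix n n F)}).toSubmonoid.units := by
  rw [Subgroup.centralizer_singleton_eq_units, ← Matrix.centralizer_eq_adjoin hirr hdeg]
  rfl

theorem Subgroup.exists_centralizer_eq_of_card_prime {G : Type*} [Group G] {p : ℕ} (hp : p.Prime)
    {X : Subgroup G} (hX : Nat.card X = p) :
    ∃ g : G, g ≠ 1 ∧ g ^ p = 1 ∧ Subgroup.centralizer (X : Set G) = Subgroup.centralizer {g} := by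
  have := Fact.mk hp
  have : Finite X := Nat.finite_of_card_ne_zero (hX ▸ hp.ne_zero)
  have : Nontrivial X := Finite.one_lt_card_iff_nontrivial.mp (hX ▸ hp.one_lt)
  obtain ⟨⟨g, hgX⟩, hg1⟩ := exists_ne (1 : X)
  have hg1 : g ≠ 1 := by simpa [Subtype.ext_iff] using hg1
  have hgp : g ^ p = 1 := by
    simpa [Subtype.ext_iff, hX] using pow_card_eq_one' (x := (⟨g, hgX⟩ : X))
  have hXg : X = zpowers g := by
    refine (Subgroup.eq_of_le_of_card_ge (zpowers_le.mpr hgX) ?_).symm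
    rw [Nat.card_zpowers, orderOf_eq_prime hgp hg1, hX]
  refine ⟨g, hg1, hgp, ?_⟩
  rw [hXg, zpowers_eq_closure, centralizer_closure]

theorem ZMod.natCast_ne_zero_of_dvd_pow_sub_one {t a p : ℕ} (ht : t.Prime) (ha : a ≠ 0)
    (hdvd : p ∣ t ^ a - 1) : (p : ZMod t) ≠ 0 := by
  rw [Ne, ZMod.natCast_eq_zero_iff]
  intro htp
  have h := Nat.dvd_sub (dvd_pow_self t ha) (htp.trans hdvd)
  rw [Nat.sub_sub_self (Nat.one_le_pow _ _ ht.pos)] at h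
  exact ht.not_dvd_one h

theorem centralizer_of_primitive_prime_divisor_general (t a p : ℕ) [Fact t.Prime]
    (hp : p.Prime) (hdvd : p ∣ t ^ a - 1)
    (hprim : ∀ b : ℕ, 1 ≤ b → b < a → ¬ p ∣ t ^ b - 1)
    (X : Subgroup (Matrix.GeneralLinearGroup (Fin a) (ZMod t)))
    (hX : Nat.card X = p) :
    IsCyclic ↥(Subgroup.centralizer (X : Set (Matrix.GeneralLinearGroup (Fin a) (ZMod t)))) ∧
      Nat.card ↥(Subgroup.centralizer (X : Set (Matrix.GeneralLinearGroup (Fin a) (ZMod t)))) =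
        t ^ a - 1 := by
  obtain ⟨g, hg1, hgp, hXg⟩ := Subgroup.exists_centralizer_eq_of_card_prime hp hX
  set M : Matrix (Fin a) (Fin a) (ZMod t) := ↑g
  have hM1 : M ≠ 1 := fun h => hg1 (Units.ext h)
  have ha : a ≠ 0 := by
    rintro rfl
    exact hM1 (Subsingleton.elim _ _)
  obtain ⟨hirr, hdeg⟩ := Matrix.irreducible_minpoly_of_pow_eq_one hp
    (ZMod.natCast_ne_zero_of_dvd_pow_sub_one Fact.out ha hdvd)
    (by simpa only [Nat.card_zmod, Fintype.card_fin] using hprim)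
    (by simpa [M] using congrArg Units.val hgp) hM1
  have := Fact.mk hirr
  have := finite_adjoinRoot hirr.ne_zero
  rw [hXg, Matrix.GeneralLinearGroup.centralizer_eq_units_adjoin g hirr hdeg]
  let e := (Submonoid.unitsEquivUnitsType _).trans
    (Units.mapEquiv (minpoly.adjoinRootEquivAdjoin (ZMod t) M).symm.toMulEquiv)
  refine ⟨isCyclic_of_surjective e.symm.toMonoidHom e.symm.surjective, ?_⟩
  rw [Nat.card_congr e.toEquiv, Nat.card_units, natCard_adjoinRoot hirr.ne_zero, hdeg,
    Nat.card_zmod, Fintype.card_fin]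

/-- If `p` is a primitive prime divisor of `t^a - 1` and `X ≤ GL_a(F_t)` has order `p`,
then `C_{GL_a(F_t)}(X)` is cyclic of order `t^a - 1`. -/
theorem centralizer_of_primitive_prime_divisor (t a p : ℕ) [Fact t.Prime] (ha : 2 ≤ a)
    (hp : p.Prime) (hdvd : p ∣ t ^ a - 1)
    (hprim : ∀ b : ℕ, 1 ≤ b → b < a → ¬ p ∣ t ^ b - 1)
    (X : Subgroup (Matrix.GeneralLinearGroup (Fin a) (ZMod t)))
    (hX : Nat.card X = p) :
    IsCyclic ↥(Subgroup.centralizer (X : Set (Matrix.GeneralLinearGroup (Fin a) (ZMod t)))) ∧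
      Nat.card ↥(Subgroup.centralizer (X : Set (Matrix.GeneralLinearGroup (Fin a) (ZMod t)))) =
        t ^ a - 1 :=
  centralizer_of_primitive_prime_divisor_general t a p hp hdvd hprim X hX
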